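/- arXiv:1812.07956 — 2 statements merged into one kernel-verified Lean document; each statement's English description precedes it below -/
import Mathlib

section
/- Let R : 𝓕 → [0,∞) be m-strongly convex and let Σ(t), t ≥ 0, be a time-dependent continuous family of bounded self-adjoint positive definite linear operators on 𝓕 with ⟨Σ(t)y, y⟩ ≥ λ‖y‖² for all y ∈ 𝓕 and some λ > 0. Let y, ȳ : [0,∞) → 𝓕 solve y′(t) = −Σ(t)∇R(y(t)) and ȳ′(t) = −Σ(0)∇R(ȳ(t)) with y(0) = ȳ(0). Define K := sup_{t ≥ 0} ‖(Σ(t) − Σ(0))∇R(y(t))‖. Then for all t ≥ 0, ‖y(t) − ȳ(t)‖ ≤ K‖Σ(0)‖^{1/2}/(λ^{3/2} m), where ‖Σ(0)‖ is the operator norm of Σ(0). -/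
/-!
Let `A := Σ(0)⁻¹` (it exists by Lax–Milgram), `u := y - ȳ` and `V := ⟪A u, u⟫`. Writing
`u' = -(δ + Σ(0) g)` with `δ = (Σ(t) - Σ(0)) ∇R(y)` and `g = ∇R(y) - ∇R(ȳ)`, one gets
`V' = -2⟪A u, δ⟫ - 2⟪u, g⟫ ≤ 2 K √V / √λ - 2 m λ V`, by Cauchy–Schwarz for the positive operator
`A`, the bound `λ ⟪A v, v⟫ ≤ ‖v‖²` and the `m`-strong monotonicity of `∇R`. Since `V(0) = 0`,
`V` can never exceed `(K / (m λ^{3/2}))²`, and `‖u‖² ≤ ‖Σ(0)‖ V` by Cauchy–Schwarz for `Σ(0)`.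
-/

open scoped RealInnerProductSpace
open Set

theorem le_of_hasDerivAt_neg_of_lt {f f' : ℝ → ℝ} {t₀ C : ℝ}
    (hf : ∀ t, t₀ ≤ t → HasDerivAt f (f' t) t) (h₀ : f t₀ ≤ C)
    (hneg : ∀ t, t₀ ≤ t → C < f t → f' t < 0) {t : ℝ} (ht : t₀ ≤ t) : f t ≤ C := by
  -- `hneg` says nothing where `f = C`, so the fence is put at `C + ε`
  refine le_of_forall_pos_le_add fun ε hε => ?_
  refine image_le_of_deriv_right_lt_deriv_boundary (B := fun _ => C + ε) (B' := 0)
    (fun x hx => (hf x hx.1).continuousAt.continuousWithinAt)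
    (fun x hx => (hf x hx.1).hasDerivWithinAt) (by linarith) (fun _ => hasDerivAt_const _ _)
    (fun x hx hfx => hneg x hx.1 (by linarith)) ⟨ht, le_rfl⟩

theorem le_div_sq_of_hasDerivAt_le_mul_sqrt_sub {f f' : ℝ → ℝ} {a b t₀ : ℝ} (hb : 0 < b)
    (hf : ∀ t, t₀ ≤ t → HasDerivAt f (f' t) t) (h₀ : f t₀ ≤ (a / b) ^ 2)
    (hf' : ∀ t, t₀ ≤ t → f' t ≤ a * √(f t) - b * f t) {t : ℝ} (ht : t₀ ≤ t) :
    f t ≤ (a / b) ^ 2 := by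
  refine le_of_hasDerivAt_neg_of_lt hf h₀ (fun s hs hlt => (hf' s hs).trans_lt ?_) ht
  have hsq : √(f s) ^ 2 = f s := Real.sq_sqrt ((sq_nonneg _).trans hlt.le)
  have hs : 0 < √(f s) := Real.sqrt_pos.2 ((sq_nonneg _).trans_lt hlt)
  have hab : a < √(f s) * b := (div_lt_iff₀ hb).1 (lt_of_pow_lt_pow_left₀ 2 hs.le (by rwa [hsq]))
  nlinarith

theorem ConvexOn.fderiv_apply_sub_le {E : Type*} [NormedAddCommGroup E] [NormedSpace ℝ E]
    {f : E → ℝ} (hf : ConvexOn ℝ univ f) (hd : Differentiable ℝ f) (a b : E) :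
    fderiv ℝ f a (b - a) ≤ fderiv ℝ f b (b - a) := by
  have hline : ∀ t, HasDerivAt (f ∘ AffineMap.lineMap a b)
      (fderiv ℝ f (AffineMap.lineMap a b t) (b - a)) t :=
    fun t => (hd _).hasFDerivAt.comp_hasDerivAt t AffineMap.hasDerivAt_lineMap
  have hmono := (hf.comp_affineMap (AffineMap.lineMap a b)).monotoneOn_deriv
    (fun t _ => (hline t).differentiableAt)
  simpa [(hline 0).deriv, (hline 1).deriv] using hmono trivial trivial zero_le_one

section InnerProductSpace

variable {H : Type*} [NormedAddCommGroup H] [InnerProductSpace ℝ H]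

theorem mul_sq_norm_sub_le_inner_gradient_sub [CompleteSpace H] {R : H → ℝ} {m : ℝ}
    (hd : Differentiable ℝ R) (hconv : ConvexOn ℝ univ fun y => R y - m / 2 * ‖y‖ ^ 2)
    (a b : H) : m * ‖b - a‖ ^ 2 ≤ ⟪gradient R b - gradient R a, b - a⟫ := by
  have hfd : ∀ x, HasFDerivAt (fun y => R y - m / 2 * ‖y‖ ^ 2)
      (InnerProductSpace.toDual ℝ H (gradient R x) - (m / 2) • (2 • innerSL ℝ x)) x :=
    fun x => (hd x).hasGradientAt.hasFDerivAt.sub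
      ((hasStrictFDerivAt_norm_sq x).hasFDerivAt.const_mul (m / 2))
  have hmono := hconv.fderiv_apply_sub_le (fun x => (hfd x).differentiableAt) a b
  rw [(hfd a).fderiv, (hfd b).fderiv] at hmono
  simp only [sub_apply, FunLike.coe_smul, Pi.smul_apply, Pi.mul_apply,
    Pi.natCast_apply, innerSL_apply_apply, InnerProductSpace.toDual_apply_apply, smul_eq_mul,
    nsmul_eq_mul] at hmono
  rw [← real_inner_self_eq_norm_sq, inner_sub_left, inner_sub_left]
  linarith

theorem ContinuousLinearMap.IsPositive.inner_sq_le {T : H →L[ℝ] H} (hT : T.IsPositive)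
    (u v : H) : ⟪T u, v⟫ ^ 2 ≤ ⟪T u, u⟫ * ⟪T v, v⟫ := by
  have hsymm : ⟪T v, u⟫ = ⟪T u, v⟫ := by rw [hT.inner_left_eq_inner_right, real_inner_comm]
  have hquad : ∀ s : ℝ, 0 ≤ ⟪T v, v⟫ * (s * s) + 2 * ⟪T u, v⟫ * s + ⟪T u, u⟫ := fun s => by
    have := hT.inner_nonneg_left (u + s • v)
    simp only [map_add, map_smul, inner_add_left, inner_add_right, real_inner_smul_left,
      real_inner_smul_right, hsymm] at this
    linarith
  have := discrim_le_zero hquad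
  rw [discrim] at this
  nlinarith

theorem HasDerivAt.inner_apply_self {A : H →L[ℝ] H} (hA : (A : H →ₗ[ℝ] H).IsSymmetric)
    {u : ℝ → H} {u' : H} {t : ℝ} (hu : HasDerivAt u u' t) :
    HasDerivAt (fun s => ⟪A (u s), u s⟫) (2 * ⟪A (u t), u'⟫) t := by
  refine ((A.hasFDerivAt.comp_hasDerivAt t hu).inner ℝ hu).congr_deriv ?_
  have := hA u' (u t)
  simp only [ContinuousLinearMap.coe_coe] at this
  rw [Function.comp_apply, this, real_inner_comm u']
  ring

theorem ContinuousLinearMap.exists_continuousLinearEquiv_of_coercive [CompleteSpace H]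
    (T : H →L[ℝ] H) {lam : ℝ} (hlam : 0 < lam) (hT : ∀ u, lam * ‖u‖ ^ 2 ≤ ⟪T u, u⟫) :
    ∃ e : H ≃L[ℝ] H, (e : H →L[ℝ] H) = T := by
  have hB : IsCoercive ((innerSL ℝ).comp T) :=
    ⟨lam, hlam, fun u => by simpa [mul_assoc, ← sq] using hT u⟩
  refine ⟨hB.continuousLinearEquivOfBilin, ContinuousLinearMap.ext fun v => ?_⟩
  exact ext_inner_right ℝ fun w => by simp

namespace ContinuousLinearEquiv

variable {e : H ≃L[ℝ] H}

theorem isPositive_symm (he : (e : H →L[ℝ] H).IsPositive) :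
    (e.symm : H →L[ℝ] H).IsPositive :=
  LinearMap.IsPositive.toLinearMap_symm (T := e.toLinearEquiv) he

theorem inner_symm_apply_apply (he : (e : H →L[ℝ] H).IsPositive) (u v : H) :
    ⟪e.symm u, e v⟫ = ⟪u, v⟫ := by
  have := he.inner_left_eq_inner_right (e.symm u) v
  simp only [coe_coe, apply_symm_apply] at this
  exact this.symm

theorem mul_inner_symm_apply_self_le {lam : ℝ} (hlam : 0 < lam)
    (hcoer : ∀ v, lam * ‖v‖ ^ 2 ≤ ⟪e v, v⟫) (u : H) : lam * ⟪e.symm u, u⟫ ≤ ‖u‖ ^ 2 := by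
  set w := e.symm u
  have hu : e w = u := e.apply_symm_apply u
  have hw : lam * ‖w‖ ≤ ‖u‖ := by
    rcases (norm_nonneg w).eq_or_lt with hw0 | hwpos
    · rw [← hw0, mul_zero]; exact norm_nonneg u
    · have := (hcoer w).trans ((real_inner_le_norm _ _).trans_eq (by rw [hu]))
      nlinarith
  calc lam * ⟪w, u⟫ ≤ lam * ‖w‖ * ‖u‖ := by
        rw [mul_assoc]; exact mul_le_mul_of_nonneg_left (real_inner_le_norm _ _) hlam.le
    _ ≤ ‖u‖ ^ 2 := by nlinarith [norm_nonneg u]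

theorem sq_norm_le_opNorm_mul_inner_symm_apply_self (he : (e : H →L[ℝ] H).IsPositive) (u : H) :
    ‖u‖ ^ 2 ≤ ‖(e : H →L[ℝ] H)‖ * ⟪e.symm u, u⟫ := by
  have hcs := he.inner_sq_le (e.symm u) u
  simp only [coe_coe, apply_symm_apply, real_inner_self_eq_norm_sq] at hcs
  have hupper : ⟪e u, u⟫ ≤ ‖(e : H →L[ℝ] H)‖ * ‖u‖ ^ 2 :=
    (real_inner_le_norm _ _).trans (by
      rw [sq, ← mul_assoc]
      exact mul_le_mul_of_nonneg_right ((e : H →L[ℝ] H).le_opNorm u) (norm_nonneg u))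
  have hnonneg : 0 ≤ ⟪e.symm u, u⟫ := (e.isPositive_symm he).inner_nonneg_left u
  rcases (sq_nonneg ‖u‖).eq_or_lt with hu | hu
  · rw [← hu]; exact mul_nonneg (norm_nonneg _) hnonneg
  · rw [real_inner_comm (e.symm u)] at hcs
    refine le_of_mul_le_mul_right ?_ hu
    nlinarith [mul_le_mul_of_nonneg_left hupper hnonneg]

theorem abs_inner_symm_apply_le (he : (e : H →L[ℝ] H).IsPositive) {lam : ℝ} (hlam : 0 < lam)
    (hcoer : ∀ v, lam * ‖v‖ ^ 2 ≤ ⟪e v, v⟫) (u v : H) :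
    |⟪e.symm u, v⟫| ≤ √⟪e.symm u, u⟫ * (‖v‖ / √lam) := by
  have hu : 0 ≤ ⟪e.symm u, u⟫ := (e.isPositive_symm he).inner_nonneg_left u
  have hcs : ⟪e.symm u, v⟫ ^ 2 ≤ ⟪e.symm u, u⟫ * ⟪e.symm v, v⟫ :=
    (e.isPositive_symm he).inner_sq_le u v
  have hv : ⟪e.symm v, v⟫ ≤ (‖v‖ / √lam) ^ 2 := by
    rw [div_pow, Real.sq_sqrt hlam.le, le_div_iff₀ hlam, mul_comm]
    exact mul_inner_symm_apply_self_le hlam hcoer v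
  rw [← Real.sqrt_sq_eq_abs, ← Real.sqrt_sq (by positivity : 0 ≤ ‖v‖ / √lam),
    ← Real.sqrt_mul hu]
  exact Real.sqrt_le_sqrt (hcs.trans (mul_le_mul_of_nonneg_left hv hu))

end ContinuousLinearEquiv

section PerturbedFlow

variable {e : H ≃L[ℝ] H} {lam m K : ℝ} {u g δ : ℝ → H}

theorem inner_symm_apply_self_le_of_hasDerivAt (he : (e : H →L[ℝ] H).IsPositive)
    (hlam : 0 < lam) (hm : 0 < m) (hcoer : ∀ v, lam * ‖v‖ ^ 2 ≤ ⟪e v, v⟫) (hu₀ : u 0 = 0)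
    (hu : ∀ t, 0 ≤ t → HasDerivAt u (-(δ t + e (g t))) t)
    (hg : ∀ t, 0 ≤ t → m * ‖u t‖ ^ 2 ≤ ⟪u t, g t⟫) (hδ : ∀ t, 0 ≤ t → ‖δ t‖ ≤ K)
    {t : ℝ} (ht : 0 ≤ t) :
    ⟪e.symm (u t), u t⟫ ≤ (K / (m * lam * √lam)) ^ 2 := by
  set V := fun s => ⟪e.symm (u s), u s⟫
  have hV : ∀ s, 0 ≤ s → HasDerivAt V (2 * ⟪e.symm (u s), -(δ s + e (g s))⟫) s :=
    fun s hs => (hu s hs).inner_apply_self (e.isPositive_symm he).isSymmetric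
  have hV' : ∀ s, 0 ≤ s → 2 * ⟪e.symm (u s), -(δ s + e (g s))⟫ ≤
      2 * (K / √lam) * √(V s) - 2 * (m * lam) * V s := by
    intro s hs
    rw [inner_neg_right, inner_add_right, e.inner_symm_apply_apply he]
    have hcross : -⟪e.symm (u s), δ s⟫ ≤ √(V s) * (‖δ s‖ / √lam) :=
      (neg_le_abs _).trans (e.abs_inner_symm_apply_le he hlam hcoer (u s) (δ s))
    have hδK : √(V s) * (‖δ s‖ / √lam) ≤ √(V s) * (K / √lam) := by
      gcongr; exact hδ s hs
    have hmV := mul_le_mul_of_nonneg_left (e.mul_inner_symm_apply_self_le hlam hcoer (u s)) hm.le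
    nlinarith [hg s hs]
  have hV₀ : V 0 ≤ (2 * (K / √lam) / (2 * (m * lam))) ^ 2 := by
    simp only [V, hu₀, map_zero, inner_zero_left]; positivity
  convert le_div_sq_of_hasDerivAt_le_mul_sqrt_sub (by positivity) hV hV₀ hV' ht using 2
  field_simp

theorem norm_le_of_hasDerivAt_neg_add_apply (he : (e : H →L[ℝ] H).IsPositive)
    (hlam : 0 < lam) (hm : 0 < m) (hcoer : ∀ v, lam * ‖v‖ ^ 2 ≤ ⟪e v, v⟫) (hu₀ : u 0 = 0)
    (hu : ∀ t, 0 ≤ t → HasDerivAt u (-(δ t + e (g t))) t)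
    (hg : ∀ t, 0 ≤ t → m * ‖u t‖ ^ 2 ≤ ⟪u t, g t⟫) (hδ : ∀ t, 0 ≤ t → ‖δ t‖ ≤ K)
    {t : ℝ} (ht : 0 ≤ t) :
    ‖u t‖ ≤ K * √‖(e : H →L[ℝ] H)‖ / (lam ^ ((3 : ℝ) / 2) * m) := by
  have hK : 0 ≤ K := (norm_nonneg _).trans (hδ 0 le_rfl)
  have hsq : ‖u t‖ ^ 2 ≤ ‖(e : H →L[ℝ] H)‖ * (K / (m * lam * √lam)) ^ 2 :=
    (e.sq_norm_le_opNorm_mul_inner_symm_apply_self he (u t)).trans <| mul_le_mul_of_nonneg_left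
      (inner_symm_apply_self_le_of_hasDerivAt he hlam hm hcoer hu₀ hu hg hδ ht) (norm_nonneg _)
  have hpow : lam ^ ((3 : ℝ) / 2) = lam * √lam := by
    rw [show (3 : ℝ) / 2 = 1 + 1 / 2 by norm_num, Real.rpow_add hlam, Real.rpow_one,
      Real.sqrt_eq_rpow]
  calc ‖u t‖ = √(‖u t‖ ^ 2) := (Real.sqrt_sq (norm_nonneg _)).symm
    _ ≤ √(‖(e : H →L[ℝ] H)‖ * (K / (m * lam * √lam)) ^ 2) := Real.sqrt_le_sqrt hsq
    _ = K * √‖(e : H →L[ℝ] H)‖ / (lam ^ ((3 : ℝ) / 2) * m) := by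
      rw [Real.sqrt_mul (norm_nonneg _), Real.sqrt_sq (by positivity), hpow]
      ring

end PerturbedFlow

end InnerProductSpace

theorem stability_lemma_time_dependent_metric_general
    {H : Type*} [NormedAddCommGroup H] [InnerProductSpace ℝ H] [CompleteSpace H]
    (R : H → ℝ) (hRdiff : Differentiable ℝ R)
    (m : ℝ) (hm : 0 < m)
    (hRconv : ConvexOn ℝ Set.univ (fun y => R y - m / 2 * ‖y‖ ^ 2))
    (Sig : ℝ → H →L[ℝ] H)
    (hSigSA : ∀ t : ℝ, 0 ≤ t → IsSelfAdjoint (Sig t))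
    (lam : ℝ) (hlam : 0 < lam)
    (hSigLB : ∀ t : ℝ, 0 ≤ t → ∀ y : H, lam * ‖y‖ ^ 2 ≤ ⟪Sig t y, y⟫)
    (y yb : ℝ → H) (hinit : y 0 = yb 0)
    (hyflow : ∀ t : ℝ, 0 ≤ t → HasDerivAt y (-(Sig t (gradient R (y t)))) t)
    (hybflow : ∀ t : ℝ, 0 ≤ t → HasDerivAt yb (-(Sig 0 (gradient R (yb t)))) t)
    (K : ℝ) (hK : IsLUB {k : ℝ | ∃ t : ℝ, 0 ≤ t ∧ k = ‖(Sig t - Sig 0) (gradient R (y t))‖} K) :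
    ∀ t : ℝ, 0 ≤ t →
      ‖y t - yb t‖ ≤ K * Real.sqrt ‖Sig 0‖ / (lam ^ ((3 : ℝ) / 2) * m) := by
  intro t ht
  obtain ⟨e, he⟩ := (Sig 0).exists_continuousLinearEquiv_of_coercive hlam (hSigLB 0 le_rfl)
  have hcoer : ∀ v, lam * ‖v‖ ^ 2 ≤ ⟪e v, v⟫ := by
    rw [← e.coe_coe, he]; exact hSigLB 0 le_rfl
  have hpos : (e : H →L[ℝ] H).IsPositive := ContinuousLinearMap.isPositive_def'.2
    ⟨he ▸ hSigSA 0 le_rfl, fun v => (by positivity : 0 ≤ lam * ‖v‖ ^ 2).trans (hcoer v)⟩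
  have hflow : ∀ s, 0 ≤ s → HasDerivAt (fun s => y s - yb s) (-((Sig s - Sig 0)
      (gradient R (y s)) + e (gradient R (y s) - gradient R (yb s)))) s := fun s hs =>
    ((hyflow s hs).sub (hybflow s hs)).congr_deriv (by
      rw [← e.coe_coe, he, sub_apply, map_sub]; abel)
  have := norm_le_of_hasDerivAt_neg_add_apply hpos hlam hm hcoer (by simp [hinit]) hflow
    (fun s _ => by simpa only [real_inner_comm] using
      mul_sq_norm_sub_le_inner_gradient_sub hRdiff hRconv (yb s) (y s))
    (fun s hs => hK.1 ⟨s, hs, rfl⟩) ht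
  rwa [he] at this

/-- **Lemma B.2 (Stability lemma).**
If `R` is `m`-strongly convex and `Σ(t)` is a continuous family of self-adjoint positive
definite operators with `⟪Σ(t)y, y⟫ ≥ λ‖y‖²`, and `y, ȳ` solve `y′ = −Σ(t)∇R(y)` and
`ȳ′ = −Σ(0)∇R(ȳ)` from the same initial point, then with
`K := sup_{t ≥ 0} ‖(Σ(t) − Σ(0))∇R(y(t))‖` one has
`‖y(t) − ȳ(t)‖ ≤ K‖Σ(0)‖^{1/2}/(λ^{3/2} m)` for all `t ≥ 0`. -/
theorem stability_lemma_time_dependent_metric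
    {H : Type*} [NormedAddCommGroup H] [InnerProductSpace ℝ H] [CompleteSpace H]
    (R : H → ℝ) (hRnonneg : ∀ y, 0 ≤ R y) (hRdiff : Differentiable ℝ R)
    (m : ℝ) (hm : 0 < m)
    (hRconv : ConvexOn ℝ Set.univ (fun y => R y - m / 2 * ‖y‖ ^ 2))
    (Sig : ℝ → H →L[ℝ] H) (hSigCont : ContinuousOn Sig (Set.Ici 0))
    (hSigSA : ∀ t : ℝ, 0 ≤ t → IsSelfAdjoint (Sig t))
    (lam : ℝ) (hlam : 0 < lam)
    (hSigLB : ∀ t : ℝ, 0 ≤ t → ∀ y : H, lam * ‖y‖ ^ 2 ≤ ⟪Sig t y, y⟫)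
    (y yb : ℝ → H) (hinit : y 0 = yb 0)
    (hyflow : ∀ t : ℝ, 0 ≤ t → HasDerivAt y (-(Sig t (gradient R (y t)))) t)
    (hybflow : ∀ t : ℝ, 0 ≤ t → HasDerivAt yb (-(Sig 0 (gradient R (yb t)))) t)
    (K : ℝ) (hK : IsLUB {k : ℝ | ∃ t : ℝ, 0 ≤ t ∧ k = ‖(Sig t - Sig 0) (gradient R (y t))‖} K) :
    ∀ t : ℝ, 0 ≤ t →
      ‖y t - yb t‖ ≤ K * Real.sqrt ‖Sig 0‖ / (lam ^ ((3 : ℝ) / 2) * m) :=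
  stability_lemma_time_dependent_metric_general R hRdiff m hm hRconv Sig hSigSA lam hlam hSigLB y yb
    hinit hyflow hybflow K hK
end

section
/- Suppose Dh is L-Lipschitz in operator norm and that ‖Dh(w₀)ᵀ y‖ ≥ σ_min ‖y‖ for all y ∈ 𝓕, where σ_min > 0. Then for every w ∈ ℝ^p with ‖w − w₀‖ < σ_min/(2L), the tangent kernel Σ(w) := Dh(w)Dh(w)ᵀ satisfies ⟨Σ(w) y, y⟩ ≥ (σ_min²/4) ‖y‖² for all y ∈ 𝓕. -/
open scoped RealInnerProductSpace

/-!
Since `⟪Σ(w) y, y⟫ = ‖Dh(w)ᵀ y‖²`, it suffices to bound `Dh(w)ᵀ` from below. Taking adjoints is an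
isometry, so `‖Dh(w)ᵀ - Dh(w₀)ᵀ‖ = ‖Dh(w) - Dh(w₀)‖ ≤ L ‖w - w₀‖ < σ_min / 2`, and a perturbation of
norm at most `δ` of an operator bounded below by `σ_min` is still bounded below by `σ_min - δ`.
-/

namespace ContinuousLinearMap

theorem sub_norm_sub_mul_le_norm_apply {𝕜 E F : Type*} [NontriviallyNormedField 𝕜]
    [NormedAddCommGroup E] [NormedSpace 𝕜 E] [NormedAddCommGroup F] [NormedSpace 𝕜 F]
    {A : E →L[𝕜] F} {c : ℝ} (hA : ∀ y, c * ‖y‖ ≤ ‖A y‖) (B : E →L[𝕜] F) (y : E) :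
    (c - ‖B - A‖) * ‖y‖ ≤ ‖B y‖ := by
  have hBA : ‖A y‖ - ‖B y‖ ≤ ‖B - A‖ * ‖y‖ :=
    calc ‖A y‖ - ‖B y‖ ≤ ‖B y - A y‖ := (norm_sub_norm_le _ _).trans_eq (norm_sub_rev _ _)
      _ ≤ ‖B - A‖ * ‖y‖ := (B - A).le_opNorm y
  linarith [hA y]

variable {E F : Type*} [NormedAddCommGroup E] [InnerProductSpace ℝ E] [CompleteSpace E]
  [NormedAddCommGroup F] [InnerProductSpace ℝ F] [CompleteSpace F]

theorem norm_adjoint_sub (A B : E →L[ℝ] F) : ‖adjoint B - adjoint A‖ = ‖B - A‖ := by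
  rw [← map_sub, LinearIsometryEquiv.norm_map]

theorem sq_mul_sq_norm_le_inner_apply_adjoint {A : E →L[ℝ] F} {c : ℝ} (hc : 0 ≤ c)
    (hA : ∀ y, c * ‖y‖ ≤ ‖adjoint A y‖) (y : F) :
    c ^ 2 * ‖y‖ ^ 2 ≤ ⟪A (adjoint A y), y⟫ := by
  rw [← adjoint_inner_right, real_inner_self_eq_norm_sq, ← mul_pow]
  exact pow_le_pow_left₀ (by positivity) (hA y) 2

end ContinuousLinearMap

theorem tangent_kernel_lower_bound_near_init_general
    {p : ℕ} {H : Type*} [NormedAddCommGroup H] [InnerProductSpace ℝ H] [CompleteSpace H]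
    (h : EuclideanSpace ℝ (Fin p) → H)
    (L : ℝ) (hL : 0 < L)
    (hDhLip : ∀ u v, ‖fderiv ℝ h u - fderiv ℝ h v‖ ≤ L * ‖u - v‖)
    (w₀ : EuclideanSpace ℝ (Fin p))
    (σmin : ℝ)
    (hσmin : ∀ y : H, σmin * ‖y‖ ≤ ‖(fderiv ℝ h w₀).adjoint y‖) :
    ∀ w : EuclideanSpace ℝ (Fin p), ‖w - w₀‖ < σmin / (2 * L) →
      ∀ y : H, σmin ^ 2 / 4 * ‖y‖ ^ 2 ≤ ⟪(fderiv ℝ h w) ((fderiv ℝ h w).adjoint y), y⟫ := by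
  intro w hw
  have hσ : 0 < σmin := by
    have := (norm_nonneg _).trans_lt hw
    rwa [div_pos_iff_of_pos_right (by positivity)] at this
  have hperturb : ‖(fderiv ℝ h w).adjoint - (fderiv ℝ h w₀).adjoint‖ ≤ σmin / 2 := by
    rw [ContinuousLinearMap.norm_adjoint_sub]
    calc ‖fderiv ℝ h w - fderiv ℝ h w₀‖ ≤ L * ‖w - w₀‖ := hDhLip w w₀
      _ ≤ L * (σmin / (2 * L)) := by gcongr
      _ = σmin / 2 := by field_simp
  have hbelow : ∀ y, σmin / 2 * ‖y‖ ≤ ‖(fderiv ℝ h w).adjoint y‖ := fun y =>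
    calc σmin / 2 * ‖y‖
        ≤ (σmin - ‖(fderiv ℝ h w).adjoint - (fderiv ℝ h w₀).adjoint‖) * ‖y‖ := by
          gcongr; linarith
      _ ≤ ‖(fderiv ℝ h w).adjoint y‖ :=
          ContinuousLinearMap.sub_norm_sub_mul_le_norm_apply hσmin _ y
  intro y
  have := ContinuousLinearMap.sq_mul_sq_norm_le_inner_apply_adjoint (by positivity) hbelow y
  linarith

/-- **Lower bound on the tangent kernel near the initialization.**
If `Dh` is `L`-Lipschitz and `‖Dh(w₀)ᵀ y‖ ≥ σ_min ‖y‖` with `σ_min > 0`, then for every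
`w` with `‖w − w₀‖ < σ_min/(2L)` the tangent kernel `Σ(w) = Dh(w)Dh(w)ᵀ` satisfies
`⟪Σ(w) y, y⟫ ≥ (σ_min²/4)‖y‖²`. -/
theorem tangent_kernel_lower_bound_near_init
    {p : ℕ} {H : Type*} [NormedAddCommGroup H] [InnerProductSpace ℝ H] [CompleteSpace H]
    (h : EuclideanSpace ℝ (Fin p) → H) (hdiff : Differentiable ℝ h)
    (L : ℝ) (hL : 0 < L)
    (hDhLip : ∀ u v, ‖fderiv ℝ h u - fderiv ℝ h v‖ ≤ L * ‖u - v‖)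
    (w₀ : EuclideanSpace ℝ (Fin p))
    (σmin : ℝ) (hσ : 0 < σmin)
    (hσmin : ∀ y : H, σmin * ‖y‖ ≤ ‖(fderiv ℝ h w₀).adjoint y‖) :
    ∀ w : EuclideanSpace ℝ (Fin p), ‖w - w₀‖ < σmin / (2 * L) →
      ∀ y : H, σmin ^ 2 / 4 * ‖y‖ ^ 2 ≤ ⟪(fderiv ℝ h w) ((fderiv ℝ h w).adjoint y), y⟫ :=
  tangent_kernel_lower_bound_near_init_general h L hL hDhLip w₀ σmin hσmin
end
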